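/- arXiv:2108.03628 — 9 statements merged into one kernel-verified Lean document; each statement's English description precedes it below -/
import Mathlib

section
/- For every integer k ≥ 1, L_{4k+1} - 1 = 5 * F_{2k} * F_{2k+1}. -/
/-! In terms of `a = F_m` and `b = F_{m+1}`, the doubling formulas give
`L_{2m+1} = F_{2m} + F_{2m+2} = 4ab + b² - a²`, and Cassini's identity `b² - ab - a² = (-1)^m`
turns this into `L_{2m+1} - (-1)^m = 5ab`. The theorem is the case `m = 2k`. -/

def lucas : ℕ → ℕ
  | 0 => 2
  | 1 => 1
  | n + 2 => lucas (n + 1) + lucas n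

open Nat

theorem lucas_add_one : ∀ n, lucas (n + 1) = fib n + fib (n + 2)
  | 0 => rfl
  | 1 => rfl
  | n + 2 => by
    rw [lucas, lucas_add_one (n + 1), lucas_add_one n, fib_add_two (n := n + 2), fib_add_two (n := n)]
    ring

theorem fib_add_one_sq_sub_fib_mul_fib_add_one_sub_fib_sq (n : ℕ) :
    (fib (n + 1) ^ 2 - fib n * fib (n + 1) - fib n ^ 2 : ℤ) = (-1) ^ n := by
  induction n with
  | zero => simp
  | succ n ih =>
    rw [fib_add_two]
    push_cast
    linear_combination -ih

theorem five_mul_fib_mul_fib_add_one (m : ℕ) :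
    5 * (fib m * fib (m + 1) : ℤ) = lucas (2 * m + 1) - (-1) ^ m := by
  have hrec : (fib (2 * m + 2) : ℤ) = fib (2 * m) + fib (2 * m + 1) := mod_cast fib_add_two
  rw [fib_two_mul_add_one, fib_two_mul_add_two] at hrec
  push_cast at hrec
  rw [lucas_add_one, fib_two_mul_add_two]
  push_cast
  linear_combination hrec - fib_add_one_sq_sub_fib_mul_fib_add_one_sub_fib_sq m

theorem lucas_shift_2_general (k : ℕ) :
    lucas (4 * k + 1) - 1 = 5 * Nat.fib (2 * k) * Nat.fib (2 * k + 1) := by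
  have hm := five_mul_fib_mul_fib_add_one (2 * k)
  rw [show 2 * (2 * k) + 1 = 4 * k + 1 by ring, pow_mul, neg_one_sq, one_pow] at hm
  suffices lucas (4 * k + 1) = 5 * fib (2 * k) * fib (2 * k + 1) + 1 by omega
  exact_mod_cast (by linear_combination -hm :
    (lucas (4 * k + 1) : ℤ) = 5 * fib (2 * k) * fib (2 * k + 1) + 1)

theorem lucas_shift_2 (k : ℕ) (hk : 1 ≤ k) :
    lucas (4 * k + 1) - 1 = 5 * Nat.fib (2 * k) * Nat.fib (2 * k + 1) :=
  lucas_shift_2_general k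
end

section
/- For every integer k ≥ 1, L_{4k+1} + 1 = L_{2k} * L_{2k+1}. -/
/-! The doubling formulas `L_n ^ 2 = L_{2n} + 2 (-1)^n` and `L_n L_{n+1} = L_{2n+1} + (-1)^n`
are proved jointly by induction, the step for the even one using the Cassini-type identity
`L_n L_{n+2} - L_{n+1}^2 = 5 (-1)^n`. At `n = 2k` the sign is `1`. -/

theorem lucas_add_two (n : ℕ) : lucas (n + 2) = lucas (n + 1) + lucas n := rfl

theorem lucas_mul_lucas_add_two_sub_sq (n : ℕ) :
    (lucas n * lucas (n + 2) - lucas (n + 1) ^ 2 : ℤ) = 5 * (-1) ^ n := by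
  induction n with
  | zero => simp [lucas]
  | succ n ih =>
    rw [lucas_add_two (n + 1), lucas_add_two n] at *
    push_cast at *
    linear_combination -ih

theorem lucas_sq_and_lucas_mul_lucas_succ (n : ℕ) :
    (lucas n ^ 2 : ℤ) = lucas (2 * n) + 2 * (-1) ^ n ∧
      (lucas n * lucas (n + 1) : ℤ) = lucas (2 * n + 1) + (-1) ^ n := by
  induction n with
  | zero => simp [lucas]
  | succ n ih =>
    obtain ⟨hsq, hmul⟩ := ih
    have hcassini := lucas_mul_lucas_add_two_sub_sq n
    rw [show 2 * (n + 1) + 1 = 2 * n + 1 + 2 by ring, show 2 * (n + 1) = 2 * n + 2 by ring,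
      lucas_add_two (2 * n + 1), lucas_add_two (2 * n)]
    rw [lucas_add_two n] at hcassini ⊢
    push_cast at hcassini ⊢
    constructor
    · linear_combination hsq + hmul - hcassini
    · linear_combination hsq + 2 * hmul - hcassini

theorem lucas_mul_lucas_succ (n : ℕ) :
    (lucas n * lucas (n + 1) : ℤ) = lucas (2 * n + 1) + (-1) ^ n :=
  (lucas_sq_and_lucas_mul_lucas_succ n).2

theorem lucas_shift_3_general (k : ℕ) :
    lucas (4 * k + 1) + 1 = lucas (2 * k) * lucas (2 * k + 1) := by
  have h := lucas_mul_lucas_succ (2 * k)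
  rw [(even_two_mul k).neg_one_pow, show 2 * (2 * k) = 4 * k by ring] at h
  exact_mod_cast h.symm

theorem lucas_shift_3 (k : ℕ) (hk : 1 ≤ k) :
    lucas (4 * k + 1) + 1 = lucas (2 * k) * lucas (2 * k + 1) :=
  lucas_shift_3_general k
end

section
/- For every integer k ≥ 1, L_{4k+3} - 1 = L_{2k+1} * L_{2k+2}. -/
/-!
Binet's formula `L n = φ ^ n + ψ ^ n` with `φ ψ = -1` gives the product formula
`L m * L (m + d) = L (2 m + d) + (-1) ^ m * L d`; for `m = 2k + 1` and `d = 1` this is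
`L (4k + 3) = L (2k + 1) * L (2k + 2) + 1`.
-/

open Real

open scoped goldenRatio

theorem coe_lucas_eq (n : ℕ) : (lucas n : ℝ) = φ ^ n + ψ ^ n := by
  induction n using Nat.twoStepInduction with
  | zero => norm_num [lucas]
  | one => norm_num [lucas, goldenRatio_add_goldenConj]
  | more n ih₀ ih₁ =>
    rw [lucas, Nat.cast_add, ih₀, ih₁, pow_add φ n 2, pow_add ψ n 2, goldenRatio_sq,
      goldenConj_sq]
    ring

theorem coe_lucas_mul_lucas_add (m d : ℕ) :
    (lucas m * lucas (m + d) : ℝ) = lucas (2 * m + d) + (-1) ^ m * lucas d := by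
  simp only [coe_lucas_eq, ← goldenRatio_mul_goldenConj]
  generalize φ = a, ψ = b  -- otherwise `ring` unfolds `φ`, `ψ` into expressions in `√5`
  ring

theorem lucas_odd_mul_lucas_succ (k : ℕ) :
    lucas (2 * k + 1) * lucas (2 * k + 2) + 1 = lucas (4 * k + 3) := by
  have h := coe_lucas_mul_lucas_add (2 * k + 1) 1
  rw [Odd.neg_one_pow ⟨k, rfl⟩, show 2 * (2 * k + 1) + 1 = 4 * k + 3 by ring,
    show lucas 1 = 1 from rfl] at h
  exact_mod_cast (by linear_combination h : (lucas (2 * k + 1) * lucas (2 * k + 2) + 1 : ℝ) =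
    lucas (4 * k + 3))

theorem lucas_shift_6_general (k : ℕ) :
    lucas (4 * k + 3) - 1 = lucas (2 * k + 1) * lucas (2 * k + 2) := by
  rw [← lucas_odd_mul_lucas_succ, Nat.add_sub_cancel]

theorem lucas_shift_6 (k : ℕ) (hk : 1 ≤ k) :
    lucas (4 * k + 3) - 1 = lucas (2 * k + 1) * lucas (2 * k + 2) :=
  lucas_shift_6_general k
end

section
/- For all positive integers a, n and every prime p not dividing a, D_{ap}(n) = D_a(pn) \ D_a(n), where D_a(n) := {d ∈ ℕ_{>0} : d ∣ a·n and gcd(a·n / d, a) = 1}. -/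
/-
Write `k = a p n / d`. Since `p` is prime, `k` is coprime to `a p` exactly when it is coprime
to `a` and not divisible by `p`; and for `d ∣ a p n`, one has `d ∣ a n` exactly when `p ∣ k`,
in which case `a n / d = k / p` inherits coprimality with `a` from `k`.
-/

def Dset (a n : ℕ) : Set ℕ := {d | 0 < d ∧ d ∣ a * n ∧ Nat.gcd (a * n / d) a = 1}

theorem Nat.coprime_mul_prime_iff {k a p : ℕ} (hp : p.Prime) :
    Nat.Coprime k (a * p) ↔ Nat.Coprime k a ∧ ¬ p ∣ k := by
  rw [Nat.coprime_mul_iff_right]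
  exact and_congr_right' (Nat.coprime_comm.trans hp.coprime_iff_not_dvd)

theorem Nat.dvd_iff_dvd_mul_div {c d m : ℕ} (hc : 0 < c) (h : d ∣ c * m) :
    d ∣ m ↔ c ∣ c * m / d := by
  constructor
  · intro hdm
    rw [Nat.mul_div_assoc c hdm]
    exact dvd_mul_right c _
  · rintro ⟨j, hj⟩
    refine ⟨j, Nat.eq_of_mul_eq_mul_left hc ?_⟩
    rw [← Nat.mul_div_cancel' h, hj]
    ring

theorem mem_Dset_iff_dvd_div_of_mem_Dset_mul {a n p d : ℕ} (hp : 0 < p)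
    (hd : d ∈ Dset a (p * n)) :
    d ∈ Dset a n ↔ p ∣ a * (p * n) / d := by
  have hswap : a * (p * n) = p * (a * n) := by ring
  obtain ⟨hd0, hdvd, hcop⟩ := hd
  rw [hswap] at hdvd hcop ⊢
  rw [← Nat.dvd_iff_dvd_mul_div hp hdvd]
  refine ⟨fun h => h.2.1, fun h => ⟨hd0, h, ?_⟩⟩
  refine Nat.Coprime.coprime_dvd_left ?_ hcop
  rw [Nat.mul_div_assoc p h]
  exact dvd_mul_left _ p

theorem mem_Dset_mul_prime_iff {a n p d : ℕ} (hp : p.Prime) :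
    d ∈ Dset (a * p) n ↔ d ∈ Dset a (p * n) ∧ ¬ p ∣ a * (p * n) / d := by
  simp only [Dset, Set.mem_ofPred_eq, mul_assoc, ← Nat.coprime_iff_gcd_eq_one,
    Nat.coprime_mul_prime_iff hp, and_assoc]

theorem Dset_mul_prime_general (a n p : ℕ) (hp : p.Prime) :
    Dset (a * p) n = Dset a (p * n) \ Dset a n := by
  ext d
  rw [mem_Dset_mul_prime_iff hp, Set.mem_sdiff]
  exact and_congr_right fun hmem =>
    not_congr (mem_Dset_iff_dvd_div_of_mem_Dset_mul hp.pos hmem).symm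

theorem Dset_mul_prime (a n p : ℕ) (ha : 0 < a) (hn : 0 < n) (hp : p.Prime)
    (hpa : ¬ p ∣ a) : Dset (a * p) n = Dset a (p * n) \ Dset a n :=
  Dset_mul_prime_general a n p hp
end

section
/- For every positive integer n, the Lucas number L_n equals the product of Φ_d over all d in D_2(n) := {d ∈ ℕ_{>0} : d ∣ 2n, gcd(2n/d, 2) = 1}, where Φ_d is the d-th homogeneous cyclotomic factor Φ_d = ∏_{1 ≤ k ≤ d, gcd(k,d)=1} (α − e^{2πik/d} β), α = (1+√5)/2, β = (1−√5)/2, and Φ_1 := 1. -/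
open Finset

noncomputable def goldenA : ℂ := (1 + Real.sqrt 5) / 2

noncomputable def goldenB : ℂ := (1 - Real.sqrt 5) / 2

noncomputable def goldPhi (n : ℕ) : ℂ :=
  if n = 1 then 1 else
    ∏ k ∈ (Finset.Icc 1 n).filter (fun k => Nat.gcd n k = 1),
      (goldenA - Complex.exp (2 * Real.pi * Complex.I * k / n) * goldenB)

/-!
With `α, β` the roots of `X² - X - 1`, we have `L_n = αⁿ + βⁿ`, and grouping the `n`-th roots of
unity by their order gives `(α - β) ∏_{d ∣ n} Φ_d = αⁿ - βⁿ` (the factor `α - β` is the one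
`Φ_1 := 1` leaves out). The divisors of `2n` in `D₂(n)` are exactly those not dividing `n`, so
the product over `D₂(n)` is `(α²ⁿ - β²ⁿ) / (αⁿ - βⁿ) = αⁿ + βⁿ`, where `αⁿ - βⁿ = √5 Fₙ ≠ 0`.
-/

open Complex Real goldenRatio

theorem lucas_eq_pow_add_pow {R : Type*} [CommRing R] {x y : R} (hsum : x + y = 1)
    (hprod : x * y = -1) : ∀ n, (lucas n : R) = x ^ n + y ^ n
  | 0 => by norm_num [lucas]
  | 1 => by simp [lucas, hsum]
  | n + 2 => by
    have hx : x ^ 2 = x + 1 := by linear_combination x * hsum - hprod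
    have hy : y ^ 2 = y + 1 := by linear_combination y * hsum - hprod
    rw [lucas, Nat.cast_add, lucas_eq_pow_add_pow hsum hprod (n + 1),
      lucas_eq_pow_add_pow hsum hprod n]
    linear_combination -x ^ n * hx - y ^ n * hy

section HomogCyclotomic

variable {R : Type*} [CommRing R] [IsDomain R]

/-- The homogenized cyclotomic polynomial `Y ^ φ(d) Φ_d(X / Y)`, evaluated at `(x, y)`. -/
noncomputable def homogCyclotomic (d : ℕ) (x y : R) : R :=
  ∏ ξ ∈ primitiveRoots d R, (x - ξ * y)

theorem homogCyclotomic_one (x y : R) :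
    homogCyclotomic 1 x y = x - y := by
  simp [homogCyclotomic, IsPrimitiveRoot.primitiveRoots_one]

theorem prod_homogCyclotomic_divisors {n : ℕ} {ζ : R}
    (hζ : IsPrimitiveRoot ζ n) (hn : 0 < n) (x y : R) :
    ∏ d ∈ n.divisors, homogCyclotomic d x y = x ^ n - y ^ n := by
  classical
  rw [hζ.pow_sub_pow_eq_prod_sub_mul x y hn,
    IsPrimitiveRoot.nthRoots_one_eq_biUnion_primitiveRoots,
    prod_biUnion fun _ _ _ _ hne => IsPrimitiveRoot.disjoint hne]
  rfl

end HomogCyclotomic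

theorem prod_filter_coprime_exp {M : Type*} [CommMonoid M] {d : ℕ} (hd : 1 < d) (f : ℂ → M) :
    ∏ k ∈ (Icc 1 d).filter (fun k => d.gcd k = 1), f (exp (2 * π * I * k / d)) =
      ∏ ξ ∈ primitiveRoots d ℂ, f ξ := by
  have hd0 : d ≠ 0 := by omega
  have : NeZero d := ⟨hd0⟩
  have hζ := isPrimitiveRoot_exp d hd0
  have hexp (k : ℕ) : exp (2 * π * I * k / d) = exp (2 * π * I / d) ^ k := by
    rw [← Complex.exp_nat_mul]; ring_nf
  have hlt {k : ℕ} (hk : k ∈ (Icc 1 d).filter (fun k => d.gcd k = 1)) : k < d := by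
    rw [mem_filter, mem_Icc] at hk
    refine lt_of_le_of_ne hk.1.2 ?_
    rintro rfl
    rw [Nat.gcd_self] at hk
    omega
  simp_rw [hexp]
  refine prod_nbij (exp (2 * π * I / d) ^ ·) (fun k hk => ?_)
    (fun k hk j hj h => hζ.pow_inj (hlt hk) (hlt hj) h) (fun ξ hξ => ?_) fun _ _ => rfl
  · rw [mem_filter] at hk
    exact (mem_primitiveRoots (by omega)).mpr (hζ.pow_of_coprime k (Nat.coprime_comm.mp hk.2))
  · obtain ⟨i, hi, hcop, rfl⟩ := hζ.isPrimitiveRoot_iff.mp ((mem_primitiveRoots (by omega)).mp hξ)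
    have hi0 : i ≠ 0 := by
      rintro rfl
      exact hd.ne' (Nat.coprime_zero_left d |>.mp hcop)
    exact ⟨i, mem_filter.mpr ⟨mem_Icc.mpr ⟨by omega, hi.le⟩, Nat.coprime_comm.mp hcop⟩, rfl⟩

theorem goldPhi_eq_homogCyclotomic {d : ℕ} (hd : 1 < d) :
    goldPhi d = homogCyclotomic d goldenA goldenB := by
  rw [goldPhi, if_neg hd.ne', homogCyclotomic,
    prod_filter_coprime_exp hd fun ξ => goldenA - ξ * goldenB]

theorem goldenA_eq : goldenA = (φ : ℂ) := by
  simp [goldenA, goldenRatio]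

theorem goldenB_eq : goldenB = (ψ : ℂ) := by
  simp [goldenB, goldenConj]

theorem goldenRatio_pow_sub_goldenConj_pow_ne_zero {n : ℕ} (hn : n ≠ 0) : φ ^ n - ψ ^ n ≠ 0 := by
  have hfib : φ ^ n - ψ ^ n = Nat.fib n * √5 := by
    rw [coe_fib_eq, div_mul_cancel₀ _ (by positivity)]
  rw [hfib]
  exact mul_ne_zero (by exact_mod_cast (Nat.fib_pos.mpr (Nat.pos_of_ne_zero hn)).ne') (by positivity)

theorem sub_mul_prod_goldPhi_divisors {n : ℕ} (hn : 0 < n) :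
    (goldenA - goldenB) * ∏ d ∈ n.divisors, goldPhi d = goldenA ^ n - goldenB ^ n := by
  have hone : 1 ∈ n.divisors := Nat.one_mem_divisors.mpr hn.ne'
  rw [← prod_homogCyclotomic_divisors (Complex.isPrimitiveRoot_exp n hn.ne') hn,
    ← mul_prod_erase _ _ hone, ← mul_prod_erase _ _ hone, goldPhi, if_pos rfl, one_mul,
    homogCyclotomic_one]
  congr 1
  refine prod_congr rfl fun d hd => goldPhi_eq_homogCyclotomic ?_
  obtain ⟨hd1, hd⟩ := mem_erase.mp hd
  exact lt_of_le_of_ne (Nat.pos_of_mem_divisors hd) (Ne.symm hd1)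

theorem gcd_two_mul_div_eq_one_iff {n d : ℕ} (h : d ∣ 2 * n) :
    Nat.gcd (2 * n / d) 2 = 1 ↔ ¬ d ∣ n := by
  rw [← Nat.Coprime, Nat.coprime_two_right, ← Nat.not_even_iff_odd, even_iff_two_dvd,
    Nat.dvd_div_iff_mul_dvd h, mul_comm 2 n, Nat.mul_dvd_mul_iff_right two_pos]

theorem filter_odd_quotient_eq_divisors_sdiff (n : ℕ) :
    (Icc 1 (2 * n)).filter (fun d => d ∣ 2 * n ∧ Nat.gcd (2 * n / d) 2 = 1) =
      (2 * n).divisors \ n.divisors := by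
  ext d
  simp only [mem_filter, mem_Icc, mem_sdiff, Nat.mem_divisors, not_and]
  constructor
  · rintro ⟨⟨hd1, hd2⟩, hd, hodd⟩
    exact ⟨⟨hd, by omega⟩, fun hdn _ => (gcd_two_mul_div_eq_one_iff hd).mp hodd hdn⟩
  · rintro ⟨⟨hd, h2n⟩, hdn⟩
    refine ⟨⟨Nat.pos_of_dvd_of_pos hd (by omega), Nat.le_of_dvd (by omega) hd⟩, hd, ?_⟩
    exact (gcd_two_mul_div_eq_one_iff hd).mpr fun h => hdn h (by omega)

theorem lucas_eq_prod_goldPhi (n : ℕ) (hn : 0 < n) :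
    (lucas n : ℂ) =
      ∏ d ∈ (Finset.Icc 1 (2 * n)).filter
          (fun d => d ∣ 2 * n ∧ Nat.gcd (2 * n / d) 2 = 1), goldPhi d := by
  have h2n : 0 < 2 * n := by omega
  have hsum : goldenA + goldenB = 1 := by
    rw [goldenA_eq, goldenB_eq]; exact_mod_cast goldenRatio_add_goldenConj
  have hprod : goldenA * goldenB = -1 := by
    rw [goldenA_eq, goldenB_eq]; exact_mod_cast goldenRatio_mul_goldenConj
  have hne : (goldenA - goldenB) * ∏ d ∈ n.divisors, goldPhi d ≠ 0 := by
    rw [sub_mul_prod_goldPhi_divisors hn, goldenA_eq, goldenB_eq]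
    exact_mod_cast goldenRatio_pow_sub_goldenConj_pow_ne_zero hn.ne'
  rw [filter_odd_quotient_eq_divisors_sdiff]
  apply mul_left_cancel₀ hne
  calc (goldenA - goldenB) * (∏ d ∈ n.divisors, goldPhi d) * lucas n
      = (goldenA ^ n - goldenB ^ n) * (goldenA ^ n + goldenB ^ n) := by
        rw [sub_mul_prod_goldPhi_divisors hn, lucas_eq_pow_add_pow hsum hprod]
    _ = goldenA ^ (2 * n) - goldenB ^ (2 * n) := by ring
    _ = _ := by
      rw [← sub_mul_prod_goldPhi_divisors h2n,
        ← prod_sdiff (Nat.divisors_subset_of_dvd h2n.ne' (dvd_mul_left n 2))]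
      ring
end

section
/- For every positive integer n, F_{3n}/F_n = ∏_{d ∈ D_3(n)} Φ_d, where D_3(n) := {d ∈ ℕ_{>0} : d ∣ 3n, gcd(3n/d, 3) = 1} and Φ_d are the homogeneous cyclotomic factors associated with the golden ratio. -/
/-!
By Binet, `F_n (α - β) = α ^ n - β ^ n = ∏_{ζ ^ n = 1} (α - ζ β)`. Grouping the roots of unity
by their order gives `F_n = ∏_{d ∣ n} Φ_d`, the factor `α - β` of order one cancelling against
the convention `Φ_1 = 1`. The divisors `d` of `3n` with `3n/d` prime to `3` are exactly the
divisors of `3n` that do not divide `n`, so the quotient `F_{3n} / F_n` is their product.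
-/

open Finset

theorem Nat.coprime_mul_div_iff_not_dvd {p n d : ℕ} (hp : p.Prime) (hd : d ∣ p * n) :
    (p * n / d).Coprime p ↔ ¬d ∣ n := by
  rw [Nat.coprime_comm, hp.coprime_iff_not_dvd, Nat.dvd_div_iff_mul_dvd hd, mul_comm,
    Nat.mul_dvd_mul_iff_left hp.pos]

theorem Nat.filter_coprime_mul_div_eq_divisors_sdiff {p n : ℕ} (hp : p.Prime) (hn : n ≠ 0) :
    (Icc 1 (p * n)).filter (fun d => d ∣ p * n ∧ Nat.gcd (p * n / d) p = 1) =
      (p * n).divisors \ n.divisors := by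
  have hpn : 0 < p * n := Nat.pos_of_ne_zero (mul_ne_zero hp.ne_zero hn)
  ext d
  simp only [mem_filter, mem_Icc, mem_sdiff, Nat.mem_divisors, and_iff_left hn,
    and_iff_left hpn.ne']
  constructor
  · rintro ⟨-, hd, hcop⟩
    exact ⟨hd, (Nat.coprime_mul_div_iff_not_dvd hp hd).1 hcop⟩
  · rintro ⟨hd, hdn⟩
    exact ⟨⟨Nat.pos_of_dvd_of_pos hd hpn, Nat.le_of_dvd hpn hd⟩, hd,
      (Nat.coprime_mul_div_iff_not_dvd hp hd).2 hdn⟩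

theorem IsPrimitiveRoot.pow_sub_pow_eq_prod_divisors {R : Type*} [CommRing R] [IsDomain R]
    {ζ : R} {n : ℕ} (hζ : IsPrimitiveRoot ζ n) (hn : 0 < n) (x y : R) :
    x ^ n - y ^ n = ∏ d ∈ n.divisors, ∏ μ ∈ primitiveRoots d R, (x - μ * y) := by
  classical
  rw [hζ.pow_sub_pow_eq_prod_sub_mul x y hn, nthRoots_one_eq_biUnion_primitiveRoots,
    prod_biUnion fun _ _ _ _ hkl => IsPrimitiveRoot.disjoint hkl]

theorem Complex.prod_primitiveRoots_eq_prod_exp {M : Type*} [CommMonoid M] (f : ℂ → M) {d : ℕ}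
    (hd : 1 < d) :
    ∏ ζ ∈ primitiveRoots d ℂ, f ζ =
      ∏ k ∈ (Icc 1 d).filter (fun k => d.gcd k = 1), f (exp (2 * Real.pi * I * k / d)) := by
  have hd0 : d ≠ 0 := by omega
  have hexp_pow (k : ℕ) : exp (2 * Real.pi * I * k / d) = exp (2 * Real.pi * I / d) ^ k := by
    rw [← exp_nat_mul]; ring_nf
  symm
  refine prod_bij (fun k _ => exp (2 * Real.pi * I * k / d)) ?_ ?_ ?_ fun _ _ => rfl
  · intro k hk
    rw [mem_primitiveRoots (by omega), mul_div_assoc]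
    exact isPrimitiveRoot_exp_of_coprime k d hd0 (Nat.coprime_comm.1 (mem_filter.1 hk).2)
  · have hlt : ∀ k ∈ (Icc 1 d).filter (fun k => d.gcd k = 1), k < d := by
      intro k hk
      simp only [mem_filter, mem_Icc] at hk
      refine lt_of_le_of_ne hk.1.2 ?_
      rintro rfl
      rw [Nat.gcd_self] at hk
      omega
    intro a ha b hb hab
    rw [hexp_pow, hexp_pow] at hab
    exact (isPrimitiveRoot_exp d hd0).pow_inj (hlt a ha) (hlt b hb) hab
  · intro ζ hζ
    obtain ⟨i, hid, hcop, rfl⟩ := (isPrimitiveRoot_iff ζ d hd0).1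
      ((mem_primitiveRoots (by omega)).1 hζ)
    have hi : i ≠ 0 := by
      rintro rfl
      exact hd.ne' (Nat.coprime_zero_left d |>.1 hcop)
    refine ⟨i, ?_, by rw [mul_div_assoc]⟩
    simp only [mem_filter, mem_Icc]
    exact ⟨⟨Nat.pos_of_ne_zero hi, hid.le⟩, Nat.coprime_comm.1 hcop⟩

theorem goldenA_eq_goldenRatio : goldenA = (Real.goldenRatio : ℂ) := by
  simp [goldenA, Real.goldenRatio]

theorem goldenB_eq_goldenConj : goldenB = (Real.goldenConj : ℂ) := by
  simp [goldenB, Real.goldenConj]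

theorem goldenA_sub_goldenB_ne_zero : goldenA - goldenB ≠ 0 := by
  rw [goldenA_eq_goldenRatio, goldenB_eq_goldenConj, ← Complex.ofReal_sub,
    Real.goldenRatio_sub_goldenConj]
  exact_mod_cast Real.sqrt_ne_zero'.2 (by norm_num)

theorem fib_mul_goldenA_sub_goldenB (n : ℕ) :
    (Nat.fib n : ℂ) * (goldenA - goldenB) = goldenA ^ n - goldenB ^ n := by
  have hbinet : (Nat.fib n : ℝ) * (Real.goldenRatio - Real.goldenConj) =
      Real.goldenRatio ^ n - Real.goldenConj ^ n := by
    rw [Real.goldenRatio_sub_goldenConj, Real.coe_fib_eq, div_mul_cancel₀ _ (by positivity)]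
  rw [goldenA_eq_goldenRatio, goldenB_eq_goldenConj]
  exact_mod_cast hbinet

theorem goldPhi_one : goldPhi 1 = 1 := if_pos rfl

theorem goldPhi_eq_prod_primitiveRoots {d : ℕ} (hd : 1 < d) :
    goldPhi d = ∏ ζ ∈ primitiveRoots d ℂ, (goldenA - ζ * goldenB) := by
  rw [goldPhi, if_neg hd.ne', Complex.prod_primitiveRoots_eq_prod_exp _ hd]

theorem fib_eq_prod_divisors_goldPhi {n : ℕ} (hn : 0 < n) :
    (Nat.fib n : ℂ) = ∏ d ∈ n.divisors, goldPhi d := by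
  have h1 : 1 ∈ n.divisors := Nat.one_mem_divisors.2 hn.ne'
  refine mul_right_cancel₀ goldenA_sub_goldenB_ne_zero ?_
  calc (Nat.fib n : ℂ) * (goldenA - goldenB)
      = ∏ d ∈ n.divisors, ∏ ζ ∈ primitiveRoots d ℂ, (goldenA - ζ * goldenB) := by
        rw [fib_mul_goldenA_sub_goldenB,
          (Complex.isPrimitiveRoot_exp n hn.ne').pow_sub_pow_eq_prod_divisors hn]
    _ = (goldenA - goldenB) * ∏ d ∈ n.divisors.erase 1, goldPhi d := by
        rw [← mul_prod_erase _ _ h1, IsPrimitiveRoot.primitiveRoots_one, prod_singleton, one_mul]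
        congr 1
        refine prod_congr rfl fun d hd => (goldPhi_eq_prod_primitiveRoots ?_).symm
        have := Nat.pos_of_mem_divisors (mem_of_mem_erase hd)
        have := ne_of_mem_erase hd
        omega
    _ = (∏ d ∈ n.divisors, goldPhi d) * (goldenA - goldenB) := by
        rw [← mul_prod_erase _ _ h1, goldPhi_one, one_mul, mul_comm]

theorem fib_ratio_eq_prod_goldPhi (n : ℕ) (hn : 0 < n) :
    (Nat.fib (3 * n) : ℂ) / (Nat.fib n : ℂ) =
      ∏ d ∈ (Finset.Icc 1 (3 * n)).filter
          (fun d => d ∣ 3 * n ∧ Nat.gcd (3 * n / d) 3 = 1), goldPhi d := by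
  have hsub : n.divisors ⊆ (3 * n).divisors :=
    Nat.divisors_subset_of_dvd (by omega) (dvd_mul_left n 3)
  have hfib : (Nat.fib n : ℂ) ≠ 0 := by exact_mod_cast (Nat.fib_pos.2 hn).ne'
  rw [Nat.filter_coprime_mul_div_eq_divisors_sdiff Nat.prime_three hn.ne', div_eq_iff hfib,
    fib_eq_prod_divisors_goldPhi (by omega : 0 < 3 * n), fib_eq_prod_divisors_goldPhi hn,
    prod_sdiff hsub]
end

section
/- Let a, b, d be positive integers with a ≠ b. Then H_a(d) ∩ H_b(d) = ∅, where H_a(d) := {h ∈ ℕ_{>0} : d ∣ a·h and gcd(a·h/d, a) = 1}. -/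
def Hset (a d : ℕ) : Set ℕ := {h | 0 < h ∧ d ∣ a * h ∧ Nat.gcd (a * h / d) a = 1}

/-! Write `g = gcd d h`, `d = g d'`, `h = g h'`. From `d m = a h` with `m = a h / d` we get
`d' m = a h'`, so `d' ∣ a` since `d'` and `h'` are coprime; writing `a = d' k` gives `m = k h'`,
and `gcd (m, a) = 1` forces `k = 1`. Thus `a = d / gcd d h` is determined by `d` and `h`. -/

lemma eq_div_gcd_of_mem_Hset {a d h : ℕ} (hd : 0 < d) (hmem : h ∈ Hset a d) :
    a = d / Nat.gcd d h := by
  obtain ⟨-, hdvd, hcop⟩ := hmem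
  set m := a * h / d
  obtain ⟨d', h', hdh', hd', hh'⟩ := Nat.exists_coprime d h
  set g := Nat.gcd d h
  have hg : 0 < g := Nat.gcd_pos_of_pos_left h hd
  have hd'pos : 0 < d' := Nat.pos_of_mul_pos_right (hd'.symm ▸ hd)
  have hdm : d' * m = a * h' := by
    apply Nat.eq_of_mul_eq_mul_right hg
    calc d' * m * g = d * m := by rw [hd']; ring
      _ = a * h := Nat.mul_div_cancel' hdvd
      _ = a * h' * g := by rw [mul_assoc, ← hh']
  obtain ⟨k, rfl⟩ : d' ∣ a := hdh'.dvd_of_dvd_mul_right (hdm ▸ dvd_mul_right d' m)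
  have hm : m = k * h' := Nat.eq_of_mul_eq_mul_left hd'pos (by rw [hdm]; ring)
  have hk : k = 1 :=
    Nat.Coprime.eq_one_of_dvd (Nat.Coprime.coprime_dvd_left (hm ▸ dvd_mul_right k h') hcop)
      (dvd_mul_left k d')
  rw [hk, mul_one, Nat.div_eq_of_eq_mul_left hg hd']

theorem Hset_disjoint_general (a b d : ℕ) (hd : 0 < d)
    (hab : a ≠ b) : Hset a d ∩ Hset b d = ∅ := by
  refine Set.eq_empty_of_forall_notMem fun h ⟨hha, hhb⟩ => hab ?_
  rw [eq_div_gcd_of_mem_Hset hd hha, eq_div_gcd_of_mem_Hset hd hhb]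

theorem Hset_disjoint (a b d : ℕ) (ha : 0 < a) (hb : 0 < b) (hd : 0 < d)
    (hab : a ≠ b) : Hset a d ∩ Hset b d = ∅ :=
  Hset_disjoint_general a b d hd hab
end

section
/- Let a, r, m be positive integers and x > 1. Let T_{a,r,m} be the set of t ∈ {1,…,m} for which there exists u ≥ 1 with t·u ≡ r (mod m) and gcd(a,u)=1, and for t ∈ T_{a,r,m} let u_{a,r,m}(t) be the least such u. Then ⋃_{n ≤ x, n ≡ r (mod m)} D_a(n) = ⋃_{t ∈ T_{a,r,m}} {d ≤ a·x/u_{a,r,m}(t) : d ≡ a·t (mod a·m)}, where D_a(n) := {d : d ∣ a·n, gcd(a·n/d, a) = 1}. -/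
lemma mem_Dset_iff {a n d : ℕ} (ha : 0 < a) :
    d ∈ Dset a n ↔ ∃ t u, 0 < t ∧ t * u = n ∧ Nat.Coprime a u ∧ d = a * t := by
  constructor
  · rintro ⟨hd, hdvd, hcop⟩
    obtain ⟨u, hu⟩ := hdvd
    have hud : a * n / d = u := by rw [hu, Nat.mul_div_cancel_left _ hd]
    replace hcop : Nat.Coprime a u := Nat.Coprime.symm (hud ▸ hcop)
    obtain ⟨t, rfl⟩ : a ∣ d := hcop.dvd_of_dvd_mul_right (hu ▸ dvd_mul_right a n)
    refine ⟨t, u, Nat.pos_of_mul_pos_left hd, ?_, hcop, rfl⟩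
    exact Nat.eq_of_mul_eq_mul_left ha (by rw [hu, mul_assoc])
  · rintro ⟨t, u, ht, rfl, hcop, rfl⟩
    refine ⟨Nat.mul_pos ha ht, ⟨u, by rw [mul_assoc]⟩, ?_⟩
    rw [← mul_assoc, Nat.mul_div_cancel_left _ (Nat.mul_pos ha ht)]
    exact hcop.symm

lemma modEq_mul_left_iff_exists {a m d t : ℕ} (ha : a ≠ 0) :
    d ≡ a * t [MOD a * m] ↔ ∃ t', d = a * t' ∧ t' ≡ t [MOD m] := by
  constructor
  · intro h
    obtain ⟨t', rfl⟩ : a ∣ d := Nat.modEq_zero_iff_dvd.mp <|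
      (h.of_mul_right m).trans (Nat.modEq_zero_iff_dvd.mpr (dvd_mul_right a t))
    exact ⟨t', rfl, Nat.ModEq.mul_left_cancel' ha h⟩
  · rintro ⟨t', rfl, h⟩
    exact h.mul_left' a

lemma exists_modEq_mem_Icc {m : ℕ} (hm : 0 < m) (k : ℕ) :
    ∃ t, 1 ≤ t ∧ t ≤ m ∧ t ≡ k [MOD m] := by
  rcases Nat.eq_zero_or_pos (k % m) with h | h
  · exact ⟨m, hm, le_rfl, by rw [Nat.ModEq, Nat.mod_self, h]⟩
  · exact ⟨k % m, h, (Nat.mod_lt _ hm).le, Nat.mod_modEq k m⟩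

lemma cast_mul_le_mul_div_iff {a t u : ℕ} {x : ℝ} (ha : 0 < a) (hu : 0 < u) :
    ((a * t : ℕ) : ℝ) ≤ a * x / u ↔ ((t * u : ℕ) : ℝ) ≤ x := by
  rw [le_div_iff₀ (by exact_mod_cast hu)]
  push_cast
  rw [mul_assoc, mul_le_mul_iff_right₀ (by exact_mod_cast ha)]

theorem union_Dset_eq_general (a r m : ℕ) (ha : 0 < a) (hm : 0 < m)
    (x : ℝ) :
    (⋃ n ∈ {n : ℕ | 0 < n ∧ (n : ℝ) ≤ x ∧ n % m = r % m}, Dset a n) =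
      ⋃ t ∈ {t : ℕ | 1 ≤ t ∧ t ≤ m ∧ ∃ u, 0 < u ∧ t * u % m = r % m ∧ Nat.gcd a u = 1},
        {d : ℕ | 0 < d ∧
          (d : ℝ) ≤ (a : ℝ) * x / (sInf {u | 0 < u ∧ t * u % m = r % m ∧ Nat.gcd a u = 1} : ℕ) ∧
          d % (a * m) = a * t % (a * m)} := by
  ext d
  simp only [Set.mem_iUnion, Set.mem_ofPred_eq, exists_prop]
  constructor
  · rintro ⟨n, ⟨hn, hnx, hnr⟩, hd⟩
    obtain ⟨t', u, ht', rfl, hcop, rfl⟩ := (mem_Dset_iff ha).mp hd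
    obtain ⟨t, ht1, htm, htt'⟩ := exists_modEq_mem_Icc hm t'
    have hu : u ∈ {u | 0 < u ∧ t * u % m = r % m ∧ Nat.gcd a u = 1} :=
      ⟨Nat.pos_of_mul_pos_left hn, (htt'.mul_right u).trans hnr, hcop⟩
    obtain ⟨hu₀, -, -⟩ := Nat.sInf_mem ⟨u, hu⟩
    refine ⟨t, ⟨ht1, htm, u, hu⟩, Nat.mul_pos ha ht', ?_, htt'.symm.mul_left' a⟩
    rw [cast_mul_le_mul_div_iff ha hu₀]
    exact le_trans (by gcongr; exact Nat.sInf_le hu) hnx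
  · rintro ⟨t, ⟨-, -, hS⟩, hd, hdx, hdt⟩
    obtain ⟨hu₀, htu₀, hcop⟩ := Nat.sInf_mem hS
    obtain ⟨t', rfl, ht't⟩ := (modEq_mul_left_iff_exists ha.ne').mp hdt
    refine ⟨t' * _, ⟨Nat.mul_pos (Nat.pos_of_mul_pos_left hd) hu₀,
      (cast_mul_le_mul_div_iff ha hu₀).mp hdx, (ht't.mul_right _).trans htu₀⟩, ?_⟩
    exact (mem_Dset_iff ha).mpr ⟨t', _, Nat.pos_of_mul_pos_left hd, rfl, hcop, rfl⟩

theorem union_Dset_eq (a r m : ℕ) (ha : 0 < a) (hr : 0 < r) (hm : 0 < m)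
    (x : ℝ) (hx : 1 < x) :
    (⋃ n ∈ {n : ℕ | 0 < n ∧ (n : ℝ) ≤ x ∧ n % m = r % m}, Dset a n) =
      ⋃ t ∈ {t : ℕ | 1 ≤ t ∧ t ≤ m ∧ ∃ u, 0 < u ∧ t * u % m = r % m ∧ Nat.gcd a u = 1},
        {d : ℕ | 0 < d ∧
          (d : ℝ) ≤ (a : ℝ) * x / (sInf {u | 0 < u ∧ t * u % m = r % m ∧ Nat.gcd a u = 1} : ℕ) ∧
          d % (a * m) = a * t % (a * m)} :=
  union_Dset_eq_general a r m ha hm x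
end

section
/- Let z ∈ (0,1], w ∈ [0,1), and q ≥ 1 an integer. Then ∑_{k=1}^∞ (z^{k-1}/k²)(w^{⌊(k-1)/q⌋} − z·w^{⌊k/q⌋}) = (1 − z·w)·Li₂(z^q·w)/(q²·z·w) + ((1−z)/z)·∑_{j=1}^{q−1} z^j (1/j² + Li₂(z^q·w; j/q)/q²), where Li₂(x) := ∑_{n≥1} x^n/n² and Li₂(x; a) := ∑_{n≥1} x^n/(n+a)². -/
noncomputable def Li2 (x : ℝ) : ℝ := ∑' n : ℕ, x ^ (n + 1) / ((n : ℝ) + 1) ^ 2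

noncomputable def Li2s (x a : ℝ) : ℝ := ∑' n : ℕ, x ^ (n + 1) / ((n : ℝ) + 1 + a) ^ 2

/-!
Split the index as `k = j + q n` with `0 ≤ j < q` and put `x = z^q w`. Then `⌊k/q⌋ = n`, while
`⌊(k+1)/q⌋` is `n` except in the top class `j = q - 1`, where it is `n + 1`. Hence the `j`-th
residue class contributes `z^j (1 - z) C_j` for `j < q - 1` and `z^(q-1) (1 - z w) C_(q-1)` for the
top class, where `C_j = ∑ₙ xⁿ / (nq + j + 1)²`. Pulling `1/q²` out of the denominators shows
`C_j = 1/(j+1)² + Li₂(x; (j+1)/q)/q²` and `C_(q-1) = Li₂(x)/(q² x)`.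
-/

open Finset

noncomputable def Li2Residue (x : ℝ) (q j : ℕ) : ℝ := ∑' n : ℕ, x ^ n / ((n : ℝ) * q + j + 1) ^ 2

lemma summable_pow_div_mul_add_sq {x : ℝ} (hx : |x| < 1) (q j : ℕ) :
    Summable fun n : ℕ => x ^ n / ((n : ℝ) * q + j + 1) ^ 2 := by
  refine (summable_geometric_of_lt_one (abs_nonneg x) hx).of_norm_bounded fun n => ?_
  have hden : 1 ≤ ((n : ℝ) * q + j + 1) ^ 2 := one_le_pow₀ (le_add_of_nonneg_left (by positivity))
  rw [norm_div, norm_pow, Real.norm_eq_abs, Real.norm_of_nonneg (by positivity)]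
  exact div_le_self (by positivity) hden

lemma Li2Residue_eq {x : ℝ} (hx : |x| < 1) {q : ℕ} (hq : 0 < q) (j : ℕ) :
    Li2Residue x q j = 1 / ((j : ℝ) + 1) ^ 2 + Li2s x (((j : ℝ) + 1) / q) / (q : ℝ) ^ 2 := by
  rw [Li2Residue, (summable_pow_div_mul_add_sq hx q j).tsum_eq_zero_add, Li2s, ← tsum_div_const]
  congr 1
  · simp
  · refine tsum_congr fun n => ?_
    have hq' : (q : ℝ) ≠ 0 := by positivity
    push_cast
    field_simp
    ring

lemma Li2_eq_Li2Residue (x : ℝ) (p : ℕ) :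
    Li2 x = ((p : ℝ) + 1) ^ 2 * x * Li2Residue x (p + 1) p := by
  rw [Li2, Li2Residue, ← tsum_mul_left]
  refine tsum_congr fun n => ?_
  push_cast
  field_simp
  ring

lemma summable_dilog_series {z w : ℝ} (hz0 : 0 ≤ z) (hz1 : z ≤ 1) (hw0 : 0 ≤ w) (hw1 : w ≤ 1)
    (q : ℕ) :
    Summable fun k : ℕ => z ^ k / ((k : ℝ) + 1) ^ 2 * (w ^ (k / q) - z * w ^ ((k + 1) / q)) := by
  have hsq : Summable fun k : ℕ => 1 / ((k : ℝ) + 1) ^ 2 := by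
    simpa using (summable_nat_add_iff 1).mpr (Real.summable_one_div_nat_pow.mpr one_lt_two)
  refine hsq.of_norm_bounded fun k => ?_
  have hdiff : |w ^ (k / q) - z * w ^ ((k + 1) / q)| ≤ 1 :=
    abs_sub_le_of_nonneg_of_le (by positivity) (pow_le_one₀ hw0 hw1) (by positivity)
      (mul_le_one₀ hz1 (by positivity) (pow_le_one₀ hw0 hw1))
  rw [Real.norm_eq_abs, abs_mul, abs_of_nonneg (by positivity)]
  calc z ^ k / ((k : ℝ) + 1) ^ 2 * |w ^ (k / q) - z * w ^ ((k + 1) / q)|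
      ≤ 1 / ((k : ℝ) + 1) ^ 2 * 1 := by gcongr; exact pow_le_one₀ hz0 hz1
    _ = 1 / ((k : ℝ) + 1) ^ 2 := mul_one _

lemma dilog_series_eq_sum_Li2Residue {z w : ℝ} (hz0 : 0 ≤ z) (hz1 : z ≤ 1) (hw0 : 0 ≤ w)
    (hw1 : w ≤ 1) (p : ℕ) :
    ∑' k : ℕ, z ^ k / ((k : ℝ) + 1) ^ 2 * (w ^ (k / (p + 1)) - z * w ^ ((k + 1) / (p + 1))) =
      ∑ j ∈ range (p + 1),
        z ^ j * (1 - z * w ^ ((j + 1) / (p + 1))) * Li2Residue (z ^ (p + 1) * w) (p + 1) j := by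
  rw [Nat.sumByResidueClasses (summable_dilog_series hz0 hz1 hw0 hw1 (p + 1)) (p + 1), sum_range]
  -- `ZMod (p + 1)` is `Fin (p + 1)` by definition, and `ZMod.val` is `Fin.val` there.
  refine Fintype.sum_congr _ _ fun (j : Fin (p + 1)) => ?_
  rw [show ZMod.val (n := p + 1) j = j from rfl, Li2Residue, ← tsum_mul_left]
  refine tsum_congr fun n => ?_
  have hdiv : (j + (p + 1) * n) / (p + 1) = n := by
    rw [Nat.add_mul_div_left _ _ p.succ_pos, Nat.div_eq_of_lt j.isLt, zero_add]
  have hdiv_succ : (j + (p + 1) * n + 1) / (p + 1) = (j + 1) / (p + 1) + n := by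
    rw [add_right_comm, Nat.add_mul_div_left _ _ p.succ_pos]
  rw [hdiv, hdiv_succ]
  push_cast
  ring

theorem dilog_series_identity (z w : ℝ) (q : ℕ) (hz0 : 0 < z) (hz1 : z ≤ 1)
    (hw0 : 0 < w) (hw1 : w < 1) (hq : 1 ≤ q) :
    (∑' k : ℕ, z ^ k / ((k : ℝ) + 1) ^ 2 * (w ^ (k / q) - z * w ^ ((k + 1) / q))) =
      (1 - z * w) * Li2 (z ^ q * w) / ((q : ℝ) ^ 2 * z * w) +
        (1 - z) / z * ∑ j ∈ Finset.Ico 1 q,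
          z ^ j * (1 / (j : ℝ) ^ 2 + Li2s (z ^ q * w) ((j : ℝ) / (q : ℝ)) / (q : ℝ) ^ 2) := by
  obtain ⟨p, rfl⟩ : ∃ p, q = p + 1 := ⟨q - 1, by omega⟩
  set x := z ^ (p + 1) * w
  have hx : |x| < 1 := by
    rw [abs_of_pos (by positivity)]
    exact (mul_le_of_le_one_left hw0.le (pow_le_one₀ hz0.le hz1)).trans_lt hw1
  have h_top : z ^ p * (1 - z * w) * Li2Residue x (p + 1) p =
      (1 - z * w) * Li2 x / (((p + 1 : ℕ) : ℝ) ^ 2 * z * w) := by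
    rw [Li2_eq_Li2Residue x p]
    push_cast
    field_simp
    ring
  have h_lower : ∑ j ∈ range p, z ^ j * (1 - z * w ^ ((j + 1) / (p + 1))) * Li2Residue x (p + 1) j =
      (1 - z) / z * ∑ j ∈ Ico 1 (p + 1),
        z ^ j * (1 / (j : ℝ) ^ 2 + Li2s x ((j : ℝ) / ((p + 1 : ℕ) : ℝ)) / ((p + 1 : ℕ) : ℝ) ^ 2) := by
    rw [sum_Ico_eq_sum_range, Nat.add_sub_cancel, mul_sum]
    refine sum_congr rfl fun j hj => ?_
    rw [add_comm 1 j, Nat.div_eq_of_lt (by simpa using mem_range.mp hj), Li2Residue_eq hx p.succ_pos]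
    push_cast
    field_simp
    ring
  rw [dilog_series_eq_sum_Li2Residue hz0.le hz1 hw0.le hw1.le, sum_range_succ,
    Nat.div_self p.succ_pos, pow_one, h_lower, h_top]
  ring
end
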